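/- Let t₀, t₁, …, t_K be a sequence of positive real numbers satisfying t_{k+1} ≤ t_k − β·t_k^{1−γ} for k = 0, 1, …, K−1, where β > 0 and 0 < γ ≤ 1. Then K ≤ ⌈t₀^γ/(βγ)⌉. -/

import Mathlib

/-!
By concavity of `x ↦ x ^ γ` (Bernoulli's inequality), one step `t ↦ t - β t ^ (1 - γ)` lowers
`t ^ γ` by at least `β γ`. Hence `t K ^ γ ≤ t 0 ^ γ - K β γ`, and positivity of `t K` bounds `K`.
-/

open Real

namespace Real

theorem rpow_le_rpow_add_mul_sub {x y p : ℝ} (hx : 0 < x) (hy : 0 ≤ y) (hp0 : 0 ≤ p)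
    (hp1 : p ≤ 1) : y ^ p ≤ x ^ p + p * x ^ (p - 1) * (y - x) := by
  have hbernoulli : (y / x) ^ p ≤ 1 + p * (y / x - 1) := by
    simpa using rpow_one_add_le_one_add_mul_self (s := y / x - 1)
      (by linarith [div_nonneg hy hx.le]) hp0 hp1
  calc y ^ p = x ^ p * (y / x) ^ p := by
        rw [div_rpow hy hx.le, mul_div_cancel₀ _ (rpow_pos_of_pos hx p).ne']
    _ ≤ x ^ p * (1 + p * (y / x - 1)) := by gcongr
    _ = x ^ p + p * x ^ (p - 1) * (y - x) := by
        rw [rpow_sub_one hx.ne']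
        field_simp

theorem rpow_le_rpow_sub_of_le_sub_mul_rpow {x y β γ : ℝ} (hx : 0 < x) (hy : 0 ≤ y)
    (hγ0 : 0 ≤ γ) (hγ1 : γ ≤ 1) (h : y ≤ x - β * x ^ (1 - γ)) :
    y ^ γ ≤ x ^ γ - β * γ := by
  have hcancel : x ^ (γ - 1) * x ^ (1 - γ) = 1 := by
    rw [← rpow_add hx]
    simp
  calc y ^ γ ≤ x ^ γ + γ * x ^ (γ - 1) * (y - x) := rpow_le_rpow_add_mul_sub hx hy hγ0 hγ1
    _ ≤ x ^ γ + γ * x ^ (γ - 1) * (-(β * x ^ (1 - γ))) := by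
        gcongr
        linarith
    _ = x ^ γ - β * γ := by linear_combination -β * γ * hcancel

end Real

theorem stmt_18 (t : ℕ → ℝ) (K : ℕ) (β γ : ℝ)
    (hβ : 0 < β) (hγ : 0 < γ) (hγ1 : γ ≤ 1)
    (hpos : ∀ k ≤ K, 0 < t k)
    (hrec : ∀ k < K, t (k + 1) ≤ t k - β * t k ^ (1 - γ)) :
    (K : ℝ) ≤ ⌈t 0 ^ γ / (β * γ)⌉₊ := by
  have hdecrease : ∀ k ≤ K, t k ^ γ ≤ t 0 ^ γ - k * (β * γ) := by
    intro k hk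
    induction k with
    | zero => simp
    | succ n ih =>
      have hstep := rpow_le_rpow_sub_of_le_sub_mul_rpow (hpos n (by omega))
        (hpos (n + 1) hk).le hγ.le hγ1 (hrec n hk)
      push_cast
      linarith [ih (by omega)]
  have htK : 0 < t K ^ γ := rpow_pos_of_pos (hpos K le_rfl) γ
  have hK : (K : ℝ) ≤ t 0 ^ γ / (β * γ) := by
    rw [le_div_iff₀ (mul_pos hβ hγ)]
    linarith [hdecrease K le_rfl]
  exact hK.trans (Nat.le_ceil _)
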